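/- Let σ ≥ 0, ε > 0, and suppose there exists a nonempty set S ⊆ V with ∑_{i=1}^r m(S, G_i) ≥ σ|S|; let γ* = min{ Δ(S, 𝒢) : S ⊆ V nonempty, ∑_{i=1}^r m(S, G_i) ≥ σ|S| }. If 0 ≤ L ≤ γ* < U, U − L ≤ εL, and S₀ minimizes S ↦ b(S, 𝒢) − U|S| over all S ⊆ V with ∑_{i=1}^r m(S, G_i) ≥ σ|S|, then S₀ ≠ ∅ and Δ(S₀, 𝒢) ≤ (1 + ε)γ*. -/

import Mathlib

/-! The objective `b(S) - U|S|` vanishes at `S = ∅`, and on nonempty `S` it is negative exactly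
when `Δ(S) < U`, since `Δ(S) = b(S)/|S|`. The optimal feasible set witnesses `γ* < U`, so the
minimizer `S₀` has negative objective: it is nonempty and `Δ(S₀) < U ≤ (1 + ε)L ≤ (1 + ε)γ*`. -/

/-- Number of edges of `G` with both endpoints in `S`. -/
noncomputable def edgeCnt {V : Type*} (G : SimpleGraph V) (S : Finset V) : ℕ :=
  {e ∈ G.edgeSet | ∀ v ∈ e, v ∈ S}.ncard

/-- Density of the subgraph induced by `S` in `G`. -/
noncomputable def dens {V : Type*} (G : SimpleGraph V) (S : Finset V) : ℝ :=
  (edgeCnt G S : ℝ) / (S.card : ℝ)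

/-- Total density across the graph snapshots. -/
noncomputable def densTot {V : Type*} {r : ℕ} (G : Fin r → SimpleGraph V) (S : Finset V) : ℝ :=
  ∑ i, dens (G i) S

/-- Difference between the maximum and minimum induced density. -/
noncomputable def densDiff {V : Type*} {r : ℕ} (G : Fin r → SimpleGraph V) (S : Finset V) : ℝ :=
  (⨆ i, dens (G i) S) - (⨅ i, dens (G i) S)

/-- Difference between the maximum and minimum induced edge count. -/
noncomputable def edgeDiff {V : Type*} {r : ℕ} (G : Fin r → SimpleGraph V) (S : Finset V) : ℝ :=
  (⨆ i, (edgeCnt (G i) S : ℝ)) - (⨅ i, (edgeCnt (G i) S : ℝ))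

section

variable {V : Type*} {r : ℕ} (G : Fin r → SimpleGraph V)

@[simp]
lemma edgeCnt_empty (H : SimpleGraph V) : edgeCnt H ∅ = 0 := by
  rw [edgeCnt, ← Set.ncard_empty (Sym2 V)]
  congr
  refine Set.eq_empty_of_forall_notMem fun e ⟨_, he⟩ => ?_
  induction e with
  | h x y => simpa using he x

@[simp]
lemma edgeDiff_empty : edgeDiff G ∅ = 0 := by
  simp [edgeDiff]

lemma densDiff_eq_edgeDiff_div (S : Finset V) : densDiff G S = edgeDiff G S / S.card := by
  have hinv : (0 : ℝ) ≤ (S.card : ℝ)⁻¹ := by positivity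
  simp only [densDiff, edgeDiff, dens, div_eq_mul_inv, sub_mul,
    Real.iSup_mul_of_nonneg hinv, Real.iInf_mul_of_nonneg hinv]

lemma densDiff_lt_iff_edgeDiff_sub_mul_card_neg {S : Finset V} (hS : S.Nonempty) (U : ℝ) :
    densDiff G S < U ↔ edgeDiff G S - U * S.card < 0 := by
  have hcard : (0 : ℝ) < S.card := by exact_mod_cast hS.card_pos
  rw [densDiff_eq_edgeDiff_div, div_lt_iff₀ hcard, sub_neg]

lemma nonempty_of_edgeDiff_sub_mul_card_neg {S : Finset V} {U : ℝ}
    (h : edgeDiff G S - U * S.card < 0) : S.Nonempty := by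
  rw [Finset.nonempty_iff_ne_empty]
  rintro rfl
  simp at h

end

theorem stmt8_general {V : Type*} {r : ℕ}
    (G : Fin r → SimpleGraph V) (σ ε L U γstar : ℝ) (hε : 0 < ε)
    (hstar : IsLeast
      {x : ℝ | ∃ S : Finset V, S.Nonempty ∧
        σ * (S.card : ℝ) ≤ (∑ i, (edgeCnt (G i) S : ℝ)) ∧ densDiff G S = x}
      γstar)
    (hLγ : L ≤ γstar) (hγU : γstar < U) (hUL : U - L ≤ ε * L)
    (S₀ : Finset V)
    (hmin : ∀ S : Finset V, σ * (S.card : ℝ) ≤ (∑ i, (edgeCnt (G i) S : ℝ)) →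
      edgeDiff G S₀ - U * (S₀.card : ℝ) ≤ edgeDiff G S - U * (S.card : ℝ)) :
    S₀.Nonempty ∧ densDiff G S₀ ≤ (1 + ε) * γstar := by
  obtain ⟨T, hT, hTfeas, hTγ⟩ := hstar.1
  have hT_neg : edgeDiff G T - U * T.card < 0 :=
    (densDiff_lt_iff_edgeDiff_sub_mul_card_neg G hT U).1 (hTγ ▸ hγU)
  have hS₀_neg : edgeDiff G S₀ - U * S₀.card < 0 := (hmin T hTfeas).trans_lt hT_neg
  have hS₀ : S₀.Nonempty := nonempty_of_edgeDiff_sub_mul_card_neg G hS₀_neg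
  have hS₀_lt : densDiff G S₀ < U :=
    (densDiff_lt_iff_edgeDiff_sub_mul_card_neg G hS₀ U).2 hS₀_neg
  have hεL : ε * L ≤ ε * γstar := mul_le_mul_of_nonneg_left hLγ hε.le
  exact ⟨hS₀, by linarith⟩

theorem stmt8 {V : Type*} [Fintype V] {r : ℕ} (hr : 1 ≤ r)
    (G : Fin r → SimpleGraph V) (σ ε L U γstar : ℝ) (hσ : 0 ≤ σ) (hε : 0 < ε)
    (hex : ∃ S : Finset V, S.Nonempty ∧ σ * (S.card : ℝ) ≤ ∑ i, (edgeCnt (G i) S : ℝ))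
    (hstar : IsLeast
      {x : ℝ | ∃ S : Finset V, S.Nonempty ∧
        σ * (S.card : ℝ) ≤ (∑ i, (edgeCnt (G i) S : ℝ)) ∧ densDiff G S = x}
      γstar)
    (hL0 : 0 ≤ L) (hLγ : L ≤ γstar) (hγU : γstar < U) (hUL : U - L ≤ ε * L)
    (S₀ : Finset V) (hfeas : σ * (S₀.card : ℝ) ≤ ∑ i, (edgeCnt (G i) S₀ : ℝ))
    (hmin : ∀ S : Finset V, σ * (S.card : ℝ) ≤ (∑ i, (edgeCnt (G i) S : ℝ)) →
      edgeDiff G S₀ - U * (S₀.card : ℝ) ≤ edgeDiff G S - U * (S.card : ℝ)) :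
    S₀.Nonempty ∧ densDiff G S₀ ≤ (1 + ε) * γstar :=
  stmt8_general G σ ε L U γstar hε hstar hLγ hγU hUL S₀ hmin
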